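/- With Λ, L, K, H, S as above (σ² > 0, ν² > 0, |ρ| < 1), det(Λ) = S·det(L) = σ²(ν²+σ²ρ^{2(p+1)})(σ²+ν²)^p/(1-ρ²); in particular det(Λ) > 0, so Λ is invertible for every ρ with |ρ| < 1. -/

import Mathlib

open Finset

/-- `det Λ = σ²(ν²+σ²ρ^{2(p+1)})(σ²+ν²)^p/(1-ρ²) > 0`, hence the limit matrix `Λ`
is invertible for every `|ρ| < 1`. -/
theorem durbin_watson_det_lambda
    (p : ℕ) (hp : 1 ≤ p) (σ2 ν2 ρ : ℝ) (hσ : 0 < σ2) (hν : 0 < ν2) (hρ : |ρ| < 1)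
    (θ : Fin p → ℝ)
    (K : Fin (p + 1) → ℝ)
    (hK : ∀ k : Fin (p + 1), K k =
      if h : (k : ℕ) = 0 then ν2
      else -(σ2 + ν2) * θ ⟨(k : ℕ) - 1, by have := k.isLt; omega⟩ - σ2 * ρ ^ (k : ℕ))
    (H : ℝ)
    (hH : H = ν2 + σ2 * ∑ k : Fin p, (θ k + ρ ^ ((k : ℕ) + 1)) ^ 2
      + ν2 * ∑ k : Fin p, (θ k) ^ 2 + σ2 * ρ ^ (2 * (p + 1)) / (1 - ρ ^ 2))
    (Λ : Matrix (Fin (p + 2)) (Fin (p + 2)) ℝ)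
    (hΛ : ∀ i j : Fin (p + 2), Λ i j =
      if hi : (i : ℕ) < p + 1 then
        (if hj : (j : ℕ) < p + 1 then (if i = j then σ2 + ν2 else 0) else K ⟨i, hi⟩)
      else (if hj : (j : ℕ) < p + 1 then K ⟨j, hj⟩ else H)) :
    Λ.det = σ2 * (ν2 + σ2 * ρ ^ (2 * (p + 1))) * (σ2 + ν2) ^ p / (1 - ρ ^ 2)
      ∧ 0 < Λ.det ∧ IsUnit Λ := by
  have hd : (0:ℝ) < σ2 + ν2 := by linarith
  have hd0 : (σ2 + ν2) ≠ 0 := ne_of_gt hd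
  have hx1 : ρ ^ 2 < 1 := by
    have h := abs_lt.mp hρ
    nlinarith [h.1, h.2]
  have h1x : (0:ℝ) < 1 - ρ ^ 2 := by linarith
  have h1x0 : (1 - ρ ^ 2) ≠ 0 := ne_of_gt h1x
  -- block matrices
  set A : Matrix (Fin (p + 1)) (Fin (p + 1)) ℝ := (σ2 + ν2) • 1 with hA
  set B : Matrix (Fin (p + 1)) (Fin 1) ℝ := fun i _ => K i with hB
  set C : Matrix (Fin 1) (Fin (p + 1)) ℝ := fun _ j => K j with hC
  set D : Matrix (Fin 1) (Fin 1) ℝ := fun _ _ => H with hD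
  have hAinv : A * ((σ2 + ν2)⁻¹ • 1) = 1 := by
    rw [hA, Matrix.smul_mul, Matrix.mul_smul, Matrix.one_mul, smul_smul,
      mul_inv_cancel₀ hd0, one_smul]
  haveI : Invertible A := invertibleOfRightInverse A ((σ2 + ν2)⁻¹ • 1) hAinv
  have hInvA : ⅟A = (σ2 + ν2)⁻¹ • 1 := invOf_eq_right_inv hAinv
  -- Λ as a block matrix
  have hblock : Λ.submatrix (@finSumFinEquiv (p+1) 1) (@finSumFinEquiv (p+1) 1) = Matrix.fromBlocks A B C D := by
    ext i j
    cases i with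
    | inl i =>
      cases j with
      | inl j =>
        simp only [Matrix.submatrix_apply, finSumFinEquiv_apply_left,
          Matrix.fromBlocks_apply₁₁, hΛ]
        rw [dif_pos (by simp [Fin.isLt]; omega), dif_pos (by simp [Fin.isLt]; omega)]
        have : (Fin.castAdd 1 i = Fin.castAdd 1 j) ↔ i = j := by
          constructor
          · intro h; exact Fin.ext (by simpa [Fin.ext_iff] using h)
          · rintro rfl; rfl
        rw [hA]
        simp [Matrix.smul_apply, Matrix.one_apply, this]
      | inr j =>
        simp only [Matrix.submatrix_apply, finSumFinEquiv_apply_left,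
          finSumFinEquiv_apply_right, Matrix.fromBlocks_apply₁₂, hΛ]
        have hj : ¬ ((Fin.natAdd (p+1) j : ℕ) < p + 1) := by
          simp [Fin.natAdd]
        rw [dif_pos (by simp [Fin.isLt]; omega), dif_neg hj]
        simp [hB]
    | inr i =>
      cases j with
      | inl j =>
        simp only [Matrix.submatrix_apply, finSumFinEquiv_apply_left,
          finSumFinEquiv_apply_right, Matrix.fromBlocks_apply₂₁, hΛ]
        have hi : ¬ ((Fin.natAdd (p+1) i : ℕ) < p + 1) := by
          simp [Fin.natAdd]
        rw [dif_neg hi, dif_pos (by simp [Fin.isLt]; omega)]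
        simp [hC]
      | inr j =>
        simp only [Matrix.submatrix_apply, finSumFinEquiv_apply_right,
          Matrix.fromBlocks_apply₂₂, hΛ]
        have hi : ¬ ((Fin.natAdd (p+1) i : ℕ) < p + 1) := by
          simp [Fin.natAdd]
        have hj : ¬ ((Fin.natAdd (p+1) j : ℕ) < p + 1) := by
          simp [Fin.natAdd]
        rw [dif_neg hi, dif_neg hj]
  have hdet1 : Λ.det = A.det * (D - C * ⅟A * B).det := by
    rw [← Matrix.det_submatrix_equiv_self (@finSumFinEquiv (p+1) 1) Λ, hblock,
      Matrix.det_fromBlocks₁₁]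
  have hdetA : A.det = (σ2 + ν2) ^ (p + 1) := by
    rw [hA]
    simp [Matrix.det_smul, Fintype.card_fin]
  -- the Schur complement entry
  have hSchurEntry : (D - C * ⅟A * B).det
      = H - (σ2 + ν2)⁻¹ * ∑ j : Fin (p+1), K j * K j := by
    rw [Matrix.det_fin_one]
    simp only [Matrix.sub_apply, hInvA, Matrix.mul_smul, Matrix.mul_one, Matrix.smul_mul,
      Matrix.smul_apply, Matrix.mul_apply]
    simp only [smul_eq_mul, hB, hC, hD]
  -- sum of squares of K
  have hK0 : K 0 = ν2 := by rw [hK 0]; simp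
  have hKs : ∀ k : Fin p, K k.succ = -((σ2 + ν2) * θ k + σ2 * ρ ^ ((k:ℕ)+1)) := by
    intro k
    rw [hK k.succ]
    rw [dif_neg (by simp [Fin.val_succ])]
    have : (⟨(k.succ : ℕ) - 1, by have := k.succ.isLt; omega⟩ : Fin p) = k := by
      apply Fin.ext; simp [Fin.val_succ]
    rw [this]
    simp [Fin.val_succ]
    ring
  have hsum : ∑ j : Fin (p+1), K j * K j
      = ν2^2 + ∑ k : Fin p, ((σ2 + ν2) * θ k + σ2 * ρ ^ ((k:ℕ)+1))^2 := by
    rw [Fin.sum_univ_succ, hK0]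
    congr 1
    · ring
    · apply Finset.sum_congr rfl
      intro k _
      rw [hKs k]; ring
  -- pointwise combination identity
  have comb_sum : ∑ k : Fin p,
      ((σ2+ν2)*(σ2*(θ k + ρ ^ ((k:ℕ)+1))^2) + (σ2+ν2)*(ν2*(θ k)^2)
        - ((σ2 + ν2) * θ k + σ2 * ρ ^ ((k:ℕ)+1))^2)
      = σ2 * ν2 * ∑ k : Fin p, (ρ^2) ^ ((k:ℕ)+1) := by
    rw [Finset.mul_sum]
    apply Finset.sum_congr rfl
    intro k _
    have h2 : (ρ^2) ^ ((k:ℕ)+1) = (ρ ^ ((k:ℕ)+1))^2 := by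
      rw [← pow_mul, ← pow_mul, mul_comm]
    rw [h2]; ring
  -- geometric sum
  have hgeo : ∑ k : Fin p, (ρ^2) ^ ((k:ℕ)+1)
      = (ρ^2 - (ρ^2)^(p+1)) / (1 - ρ^2) := by
    rw [Fin.sum_univ_eq_sum_range (fun k => (ρ^2)^(k+1)) p]
    have : ∑ k ∈ Finset.range p, (ρ^2)^(k+1) = ρ^2 * ∑ k ∈ Finset.range p, (ρ^2)^k := by
      rw [Finset.mul_sum]
      exact Finset.sum_congr rfl (fun k _ => by rw [pow_succ]; ring)
    rw [this, geom_sum_eq (by intro h; rw [h] at hx1; linarith)]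
    have hxm1 : ρ ^ 2 - 1 ≠ 0 := by intro h; apply h1x0; linarith
    field_simp [hxm1]
    ring
  have hpm : ρ ^ (2 * (p+1)) = (ρ^2) ^ (p+1) := by rw [pow_mul]
  -- the Schur complement value
  have hSchur : (σ2+ν2) * H - ∑ j : Fin (p+1), K j * K j
      = σ2 * (ν2 + σ2 * (ρ^2)^(p+1)) / (1 - ρ^2) := by
    rw [hH, hsum, hpm]
    have e1 : (σ2+ν2) * (σ2 * ∑ k : Fin p, (θ k + ρ ^ ((k:ℕ)+1))^2)
        = ∑ k : Fin p, (σ2+ν2)*(σ2*(θ k + ρ ^ ((k:ℕ)+1))^2) := by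
      simp only [Finset.mul_sum]
    have e2 : (σ2+ν2) * (ν2 * ∑ k : Fin p, (θ k)^2)
        = ∑ k : Fin p, (σ2+ν2)*(ν2*(θ k)^2) := by
      simp only [Finset.mul_sum]
    have e3 : ∑ k : Fin p,
        ((σ2+ν2)*(σ2*(θ k + ρ ^ ((k:ℕ)+1))^2) + (σ2+ν2)*(ν2*(θ k)^2)
          - ((σ2 + ν2) * θ k + σ2 * ρ ^ ((k:ℕ)+1))^2)
        = ∑ k : Fin p, (σ2+ν2)*(σ2*(θ k + ρ ^ ((k:ℕ)+1))^2)
          + ∑ k : Fin p, (σ2+ν2)*(ν2*(θ k)^2)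
          - ∑ k : Fin p, ((σ2 + ν2) * θ k + σ2 * ρ ^ ((k:ℕ)+1))^2 := by
      rw [Finset.sum_sub_distrib, Finset.sum_add_distrib]
    rw [e3, ← e1, ← e2] at comb_sum
    rw [hgeo] at comb_sum
    field_simp at comb_sum ⊢
    linear_combination comb_sum
  -- final determinant value
  have hdetval : Λ.det = σ2 * (ν2 + σ2 * ρ ^ (2 * (p + 1))) * (σ2 + ν2) ^ p / (1 - ρ ^ 2) := by
    rw [hdet1, hdetA, hSchurEntry]
    have : (σ2 + ν2) ^ (p + 1) * (H - (σ2 + ν2)⁻¹ * ∑ j : Fin (p+1), K j * K j)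
        = (σ2 + ν2) ^ p * ((σ2+ν2) * H - ∑ j : Fin (p+1), K j * K j) := by
      rw [pow_succ]
      field_simp
    rw [this, hSchur, hpm]
    ring
  have hR : (0:ℝ) ≤ ρ ^ (2 * (p+1)) := by rw [pow_mul]; positivity
  have hpos : 0 < Λ.det := by
    rw [hdetval]
    apply div_pos _ h1x
    have : (0:ℝ) < ν2 + σ2 * ρ ^ (2 * (p + 1)) := by nlinarith
    positivity
  exact ⟨hdetval, hpos, (Matrix.isUnit_iff_isUnit_det Λ).2 (isUnit_iff_ne_zero.2 (ne_of_gt hpos))⟩
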